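/- For any two compatible strings s and t of length n, if α is the maximum number of occurrences of any single symbol in s, then d(s,t) ≤ 2(n − α). -/

import Mathlib

/-- Prefix reversal (flip) of the first `i` symbols of `s`. -/
def pflip (i : ℕ) (s : List ℕ) : List ℕ := (s.take i).reverse ++ s.drop i

/-- One flip step: `t` is obtained from `s` by some flip `f^(i)` with `1 ≤ i ≤ |s|`. -/
def FlipStep (s t : List ℕ) : Prop := ∃ i, 1 ≤ i ∧ i ≤ s.length ∧ t = pflip i s

/-- `ReachIn m s t`: `t` can be obtained from `s` by exactly `m` flips. -/
def ReachIn : ℕ → List ℕ → List ℕ → Prop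
  | 0 => fun s t => s = t
  | (m+1) => fun s t => ∃ u, FlipStep s u ∧ ReachIn m u t

/-- Flip distance: minimum number of flips transforming `s` into `t`. -/
noncomputable def flipDist (s t : List ℕ) : ℕ := sInf {m | ReachIn m s t}

/-- Two strings are compatible if every symbol occurs equally often in both. -/
def Compatible (s t : List ℕ) : Prop := ∀ a, s.count a = t.count a

/-- A string is fully `k`-ary if the set of symbols occurring in it is exactly `{0,…,k-1}`. -/
def FullyKary (k : ℕ) (s : List ℕ) : Prop := ∀ a, a ∈ s ↔ a < k

/-- A string is normalized if no two adjacent symbols are equal. -/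
def Normalized (s : List ℕ) : Prop := s.Chain' (· ≠ ·)

/-- A string is grouped if the occurrences of each symbol are consecutive. -/
def Grouped (s : List ℕ) : Prop :=
  ∀ i j l : Fin s.length, i < j → j < l → s.get i = s.get l → s.get j = s.get i

/-- Flip grouping distance: minimum number of flips transforming `s` into some grouped string. -/
noncomputable def groupDist (s : List ℕ) : ℕ := sInf {m | ∃ t, Grouped t ∧ ReachIn m s t}

/-- Flip sorting distance: flip distance from `s` to its non-descending rearrangement `I(s)`. -/
noncomputable def sortDist (s : List ℕ) : ℕ := flipDist s (s.insertionSort (· ≤ ·))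

/-- `rep w m` is the concatenation of `m` copies of the string `w`. -/
def rep (w : List ℕ) (m : ℕ) : List ℕ := (List.replicate m w).flatten

/-!
Fix a symbol `a` occurring `α` times in `s` and build `t` from the right. If the last symbols
of the two strings agree, they are dropped. Otherwise one of them, say the last symbol `z` of
`t`, differs from `a`; two flips (first `z` to the front, then the whole prefix ending at `z`)
move `z` to the end of `s`, after which it is dropped. So every two flips consume an occurrence
of a symbol other than `a`, and there are `n - α` of those.
-/

open List

lemma pflip_length (i : ℕ) (s : List ℕ) : (pflip i s).length = s.length := by
  simp only [pflip, length_append, length_reverse, length_take, length_drop]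
  omega

lemma pflip_pflip {i : ℕ} {s : List ℕ} (h : i ≤ s.length) : pflip i (pflip i s) = s := by
  have hi : (s.take i).reverse.length = i := by simp [h]
  rw [pflip, pflip, take_left' hi, drop_left' hi, reverse_reverse, take_append_drop]

lemma pflip_perm (i : ℕ) (s : List ℕ) : pflip i s ~ s :=
  ((reverse_perm _).append_right _).trans (by rw [take_append_drop])

lemma pflip_append {i : ℕ} {s : List ℕ} (r : List ℕ) (h : i ≤ s.length) :
    pflip i (s ++ r) = pflip i s ++ r := by
  rw [pflip, pflip, take_append_of_le_length h, drop_append_of_le_length h, append_assoc]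

lemma pflip_length_self (s : List ℕ) : pflip s.length s = s.reverse := by
  simp [pflip]

namespace FlipStep

variable {s t : List ℕ}

lemma symm (h : FlipStep s t) : FlipStep t s := by
  obtain ⟨i, hi, his, rfl⟩ := h
  exact ⟨i, hi, (pflip_length i s).symm ▸ his, (pflip_pflip his).symm⟩

lemma perm (h : FlipStep s t) : s ~ t := by
  obtain ⟨i, -, -, rfl⟩ := h
  exact (pflip_perm i s).symm

lemma append_right (r : List ℕ) (h : FlipStep s t) : FlipStep (s ++ r) (t ++ r) := by
  obtain ⟨i, hi, his, rfl⟩ := h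
  exact ⟨i, hi, by simp only [length_append]; omega, (pflip_append r his).symm⟩

lemma reachIn_one (h : FlipStep s t) : ReachIn 1 s t := ⟨t, h, rfl⟩

end FlipStep

namespace ReachIn

variable {m k : ℕ} {s t : List ℕ}

lemma trans {u : List ℕ} (h₁ : ReachIn m s u) (h₂ : ReachIn k u t) : ReachIn (m + k) s t := by
  induction m generalizing s with
  | zero => cases h₁; simpa using h₂
  | succ m ih =>
    obtain ⟨w, hw, hr⟩ := h₁
    rw [Nat.add_right_comm]
    exact ⟨w, hw, ih hr⟩

lemma symm (h : ReachIn m s t) : ReachIn m t s := by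
  induction m generalizing s with
  | zero => exact (h : s = t).symm
  | succ m ih =>
    obtain ⟨u, hu, hr⟩ := h
    exact (ih hr).trans hu.symm.reachIn_one

lemma perm (h : ReachIn m s t) : s ~ t := by
  induction m generalizing s with
  | zero => exact (h : s = t) ▸ Perm.rfl
  | succ m ih =>
    obtain ⟨u, hu, hr⟩ := h
    exact hu.perm.trans (ih hr)

lemma append_right (r : List ℕ) (h : ReachIn m s t) : ReachIn m (s ++ r) (t ++ r) := by
  induction m generalizing s with
  | zero => exact congrArg (· ++ r) (h : s = t)
  | succ m ih =>
    obtain ⟨u, hu, hr⟩ := h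
    exact ⟨u ++ r, hu.append_right r, ih hr⟩

end ReachIn

lemma reachIn_two_move_to_end (s₁ s₂ : List ℕ) (x : ℕ) :
    ReachIn 2 (s₁ ++ x :: s₂) (s₂.reverse ++ s₁ ++ [x]) := by
  have hpre : (s₁ ++ [x]).length = s₁.length + 1 := by simp
  have hfront : pflip (s₁.length + 1) (s₁ ++ x :: s₂) = x :: (s₁.reverse ++ s₂) := by
    rw [pflip, ← singleton_append, ← append_assoc, take_left' hpre, drop_left' hpre]
    simp
  have hback : pflip (x :: (s₁.reverse ++ s₂)).length (x :: (s₁.reverse ++ s₂)) =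
      s₂.reverse ++ s₁ ++ [x] := by
    rw [pflip_length_self]
    simp
  exact (FlipStep.reachIn_one ⟨_, by omega, by simp, hfront.symm⟩).trans
    (FlipStep.reachIn_one ⟨_, by simp, le_rfl, hback.symm⟩)

lemma exists_reachIn_two_append_singleton {s : List ℕ} {x : ℕ} (hx : x ∈ s) :
    ∃ s', ReachIn 2 s (s' ++ [x]) := by
  obtain ⟨s₁, s₂, rfl⟩ := append_of_mem hx
  exact ⟨_, reachIn_two_move_to_end s₁ s₂ x⟩

lemma flipDist_le {m : ℕ} {s t : List ℕ} (h : ReachIn m s t) : flipDist s t ≤ m :=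
  Nat.sInf_le h

lemma exists_reachIn_le_append_singleton_of_ne {a n : ℕ}
    (ih : ∀ {s t : List ℕ}, s ~ t → s.length = n → ∃ m ≤ 2 * (n - s.count a), ReachIn m s t)
    {s t : List ℕ} {z : ℕ} (hst : s ~ t ++ [z]) (hs : s.length = n + 1) (hz : z ≠ a) :
    ∃ m ≤ 2 * (n + 1 - s.count a), ReachIn m s (t ++ [z]) := by
  have hzs : z ∈ s := hst.symm.subset (mem_append_right t (mem_singleton_self z))
  obtain ⟨s', hs'⟩ := exists_reachIn_two_append_singleton hzs
  have hs't : s' ~ t := (perm_append_right_iff [z]).mp (hs'.perm.symm.trans hst)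
  have hlen : s'.length = n := by
    have := hs'.perm.length_eq
    simp only [length_append, length_singleton] at this
    omega
  have hcount : s.count a = s'.count a := by simp [hs'.perm.count_eq, hz]
  obtain ⟨m, hm, hr⟩ := ih hs't hlen
  refine ⟨2 + m, ?_, hs'.trans (hr.append_right [z])⟩
  have := count_le_length (a := a) (l := s')
  omega

theorem exists_reachIn_le_of_perm (a : ℕ) {s t : List ℕ} (hst : s ~ t) :
    ∃ m ≤ 2 * (s.length - s.count a), ReachIn m s t := by
  induction hn : s.length generalizing s t with
  | zero =>
    obtain rfl := length_eq_zero_iff.mp hn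
    exact ⟨0, le_rfl, (perm_nil.mp hst.symm).symm⟩
  | succ n ih =>
    obtain ⟨v, y, rfl⟩ := s.eq_nil_or_concat'.resolve_left (by rintro rfl; simp at hn)
    obtain ⟨w, z, rfl⟩ := t.eq_nil_or_concat'.resolve_left (by rintro rfl; simp at hst)
    rcases ne_or_eq z a with hz | rfl
    · exact exists_reachIn_le_append_singleton_of_ne ih hst hn hz
    rcases ne_or_eq y z with hy | rfl
    · obtain ⟨m, hm, hr⟩ :=
        exists_reachIn_le_append_singleton_of_ne ih hst.symm (hst.length_eq ▸ hn) hy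
      exact ⟨m, hst.count_eq z ▸ hm, hr.symm⟩
    · obtain ⟨m, hm, hr⟩ := ih ((perm_append_right_iff [y]).mp hst) (by simpa using hn)
      exact ⟨m, by simpa using hm, hr.append_right [y]⟩

theorem distance_upper_bound_max_multiplicity_general (n α : ℕ) (s t : List ℕ)
    (hlen : s.length = n) (hcomp : Compatible s t)
    (hmax : ∃ a, s.count a = α) :
    flipDist s t ≤ 2 * (n - α) := by
  obtain ⟨a, rfl⟩ := hmax
  obtain ⟨m, hm, hr⟩ := exists_reachIn_le_of_perm a (perm_iff_count.mpr hcomp)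
  exact (flipDist_le hr).trans (hlen ▸ hm)

theorem distance_upper_bound_max_multiplicity (n α : ℕ) (s t : List ℕ)
    (hlen : s.length = n) (hcomp : Compatible s t)
    (hmax : ∃ a, s.count a = α) (hub : ∀ a, s.count a ≤ α) :
    flipDist s t ≤ 2 * (n - α) :=
  distance_upper_bound_max_multiplicity_general n α s t hlen hcomp hmax
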